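/- arXiv:math/0301348 — 5 statements merged into one kernel-verified Lean document; each statement's English description precedes it below -/
import Mathlib

section
/- Let K ≤ H ≤ G be a chain of subgroups of a group G. If K is co-amenable in H and H is co-amenable in G, then K is co-amenable in G. -/
/-- The space ℓ∞(X) of bounded real-valued functions on `X`,
as a submodule of `X → ℝ`. -/
def BddFns (X : Type*) : Submodule ℝ (X → ℝ) where
  carrier := {f | ∃ C : ℝ, ∀ x, |f x| ≤ C}
  add_mem' := by
    rintro f g ⟨C, hC⟩ ⟨D, hD⟩
    exact ⟨C + D, fun x => (abs_add_le _ _).trans (add_le_add (hC x) (hD x))⟩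
  zero_mem' := ⟨0, fun x => by simp⟩
  smul_mem' := by
    rintro c f ⟨C, hC⟩
    exact ⟨|c| * C, fun x => by
      simp only [Pi.smul_apply, smul_eq_mul, abs_mul]
      exact mul_le_mul_of_nonneg_left (hC x) (abs_nonneg c)⟩

/-- Left translation of a function on a `G`-set: `(g · f)(x) = f (g⁻¹ • x)`. -/
def lshift {G X : Type*} [Group G] [MulAction G X] (g : G) (f : X → ℝ) : X → ℝ :=
  fun x => f (g⁻¹ • x)

lemma lshift_mem {G X : Type*} [Group G] [MulAction G X] (g : G) {f : X → ℝ}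
    (hf : f ∈ BddFns X) : lshift g f ∈ BddFns X := by
  obtain ⟨C, hC⟩ := hf
  exact ⟨C, fun x => hC _⟩

/-- A `G`-invariant mean on ℓ∞(X): a linear functional `m` with `m 1 = 1`,
`m f ≥ 0` for `f ≥ 0` pointwise, invariant under the `G`-action. -/
structure InvariantMean (G : Type*) (X : Type*) [Group G] [MulAction G X] where
  toFun : (BddFns X) →ₗ[ℝ] ℝ
  norm_one : toFun ⟨(fun _ => 1), ⟨1, fun _ => by norm_num⟩⟩ = 1
  nonneg : ∀ f : BddFns X, (∀ x, 0 ≤ (f : X → ℝ) x) → 0 ≤ toFun f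
  invariant : ∀ (g : G) (f : BddFns X),
    toFun ⟨lshift g (f : X → ℝ), lshift_mem g f.2⟩ = toFun f

/-- A subgroup `H ≤ G` is co-amenable in `G` if there is a `G`-invariant mean
on ℓ∞(G/H), where `G/H` is the left coset space. -/
def Subgroup.Coamenable {G : Type*} [Group G] (H : Subgroup G) : Prop :=
  Nonempty (InvariantMean G (G ⧸ H))

/-- A group is amenable if there is a left-translation-invariant mean on ℓ∞(G). -/
def AmenableGroup (G : Type*) [Group G] : Prop :=
  Nonempty (InvariantMean G G)

/-! Average twice. For `f ∈ ℓ∞(G/K)`, the `H`-invariant mean on `H/K` averages `f` over the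
translate `g • (H/K) ⊆ G/K`; by `H`-invariance the result depends only on the coset `gH`, so it
is a bounded function on `G/H`, and the `G`-invariant mean on `G/H` is applied to it. Left
translation by `G` commutes with this fibrewise averaging, so the composite is `G`-invariant. -/

namespace BddFns

variable {X Y : Type*}

def const (X : Type*) (c : ℝ) : BddFns X :=
  ⟨fun _ => c, |c|, fun _ => le_rfl⟩

def comp (φ : Y → X) : BddFns X →ₗ[ℝ] BddFns Y where
  toFun f := ⟨f ∘ φ, by obtain ⟨C, hC⟩ := f.2; exact ⟨C, fun y => hC (φ y)⟩⟩
  map_add' _ _ := rfl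
  map_smul' _ _ := rfl

@[simp]
lemma comp_apply (φ : Y → X) (f : BddFns X) (y : Y) :
    (comp φ f : Y → ℝ) y = (f : X → ℝ) (φ y) := rfl

end BddFns

namespace InvariantMean

variable {G X Y : Type*} [Group G] [MulAction G X] [MulAction G Y] (m : InvariantMean G X)

lemma map_const (c : ℝ) : m.toFun (BddFns.const X c) = c := by
  have : BddFns.const X c = c • ⟨fun _ => 1, ⟨1, fun _ => by norm_num⟩⟩ := by
    ext; simp [BddFns.const]
  rw [this, map_smul, m.norm_one, smul_eq_mul, mul_one]

lemma mono {f f' : BddFns X} (h : ∀ x, (f : X → ℝ) x ≤ (f' : X → ℝ) x) :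
    m.toFun f ≤ m.toFun f' := by
  have := m.nonneg (f' - f) fun x => sub_nonneg.2 (h x)
  rwa [map_sub, sub_nonneg] at this

lemma abs_le_of_forall_abs_le {f : BddFns X} {C : ℝ} (h : ∀ x, |(f : X → ℝ) x| ≤ C) :
    |m.toFun f| ≤ C := by
  rw [abs_le]
  constructor
  · simpa only [map_const] using m.mono (f := BddFns.const X (-C)) fun x => (abs_le.1 (h x)).1
  · simpa only [map_const] using m.mono (f' := BddFns.const X C) fun x => (abs_le.1 (h x)).2

def comp (A : BddFns Y →ₗ[ℝ] BddFns X)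
    (h_one : A (BddFns.const Y 1) = BddFns.const X 1)
    (h_nonneg : ∀ f : BddFns Y, (∀ y, 0 ≤ (f : Y → ℝ) y) →
      ∀ x, 0 ≤ (A f : X → ℝ) x)
    (h_lshift : ∀ (g : G) (f : BddFns Y),
      A ⟨lshift g (f : Y → ℝ), lshift_mem g f.2⟩
        = ⟨lshift g (A f : X → ℝ), lshift_mem g (A f).2⟩) :
    InvariantMean G Y where
  toFun := m.toFun ∘ₗ A
  norm_one := (congrArg m.toFun h_one).trans (m.map_const 1)
  nonneg f hf := m.nonneg (A f) (h_nonneg f hf)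
  invariant g f := by
    simp only [LinearMap.comp_apply, h_lshift]
    exact m.invariant g (A f)

end InvariantMean

section CosetAverage

variable {G Y Z : Type*} [Group G] [MulAction G Y] {H : Subgroup G} [MulAction H Z]
  (m : InvariantMean H Z) (φ : Z → Y)
  (hφ : ∀ (h : H) (z : Z), φ (h • z) = (h : G) • φ z)

def translateAverage (f : BddFns Y) (g : G) : ℝ :=
  m.toFun (BddFns.comp (fun z => g • φ z) f)

include hφ in
lemma translateAverage_mul (f : BddFns Y) (g : G) (h : H) :
    translateAverage m φ f (g * h) = translateAverage m φ f g := by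
  rw [translateAverage, translateAverage,
    ← m.invariant h⁻¹ (BddFns.comp (fun z => g • φ z) f)]
  congr 2
  ext z
  simp [lshift, hφ, mul_smul]

def cosetAverageFun (f : BddFns Y) (x : G ⧸ H) : ℝ :=
  Quotient.liftOn' x (translateAverage m φ f) fun a b hab => by
    rw [QuotientGroup.leftRel_apply] at hab
    simpa using (translateAverage_mul m φ hφ f a ⟨a⁻¹ * b, hab⟩).symm

@[simp]
lemma cosetAverageFun_mk (f : BddFns Y) (g : G) :
    cosetAverageFun m φ hφ f g = translateAverage m φ f g := rfl

lemma cosetAverageFun_mem (f : BddFns Y) : cosetAverageFun m φ hφ f ∈ BddFns (G ⧸ H) := by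
  obtain ⟨C, hC⟩ := f.2
  refine ⟨C, fun x => ?_⟩
  induction x using QuotientGroup.induction_on with
  | H g => exact m.abs_le_of_forall_abs_le fun z => hC _

def cosetAverage : BddFns Y →ₗ[ℝ] BddFns (G ⧸ H) where
  toFun f := ⟨cosetAverageFun m φ hφ f, cosetAverageFun_mem m φ hφ f⟩
  map_add' f f' := by
    ext x
    induction x using QuotientGroup.induction_on with
    | H g => simp [translateAverage]
  map_smul' c f := by
    ext x
    induction x using QuotientGroup.induction_on with
    | H g => simp [translateAverage]

lemma cosetAverage_const (c : ℝ) :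
    cosetAverage m φ hφ (BddFns.const Y c) = BddFns.const (G ⧸ H) c := by
  ext x
  induction x using QuotientGroup.induction_on with
  | H g => exact m.map_const c

lemma cosetAverage_nonneg {f : BddFns Y} (hf : ∀ y, 0 ≤ (f : Y → ℝ) y) (x : G ⧸ H) :
    0 ≤ (cosetAverage m φ hφ f : G ⧸ H → ℝ) x := by
  induction x using QuotientGroup.induction_on with
  | H g => exact m.nonneg _ fun z => hf _

lemma cosetAverage_lshift (g : G) (f : BddFns Y) :
    cosetAverage m φ hφ ⟨lshift g (f : Y → ℝ), lshift_mem g f.2⟩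
      = ⟨lshift g (cosetAverage m φ hφ f : G ⧸ H → ℝ),
          lshift_mem g (cosetAverage m φ hφ f).2⟩ := by
  ext x
  induction x using QuotientGroup.induction_on with
  | H g' =>
    change m.toFun (BddFns.comp (fun z => g' • φ z) _)
      = m.toFun (BddFns.comp (fun z => (g⁻¹ * g') • φ z) f)
    congr 1
    ext z
    simp [lshift, mul_smul]

theorem Subgroup.Coamenable.nonempty_invariantMean (hH : H.Coamenable) (m : InvariantMean H Z)
    (φ : Z → Y) (hφ : ∀ (h : H) (z : Z), φ (h • z) = (h : G) • φ z) :
    Nonempty (InvariantMean G Y) :=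
  ⟨hH.some.comp (cosetAverage m φ hφ) (cosetAverage_const m φ hφ 1)
    (fun _ => cosetAverage_nonneg m φ hφ) (cosetAverage_lshift m φ hφ)⟩

end CosetAverage

def Subgroup.quotientSubgroupOfToQuotient {G : Type*} [Group G] (K H : Subgroup G) :
    H ⧸ K.subgroupOf H → G ⧸ K :=
  Quotient.map' Subtype.val fun a b hab => by
    simpa [QuotientGroup.leftRel_apply, Subgroup.mem_subgroupOf] using hab

lemma Subgroup.quotientSubgroupOfToQuotient_smul {G : Type*} [Group G] (K H : Subgroup G)
    (h : H) (x : H ⧸ K.subgroupOf H) :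
    K.quotientSubgroupOfToQuotient H (h • x)
      = (h : G) • K.quotientSubgroupOfToQuotient H x := by
  induction x using QuotientGroup.induction_on with
  | H h' => rfl

theorem coamenable_trans_general {G : Type*} [Group G] (K H : Subgroup G)
    (hK : (K.subgroupOf H).Coamenable) (hH : H.Coamenable) :
    K.Coamenable :=
  hH.nonempty_invariantMean hK.some (K.quotientSubgroupOfToQuotient H)
    (K.quotientSubgroupOfToQuotient_smul H)

/-- If `K ≤ H ≤ G`, `K` is co-amenable in `H` and `H` is co-amenable in `G`,
then `K` is co-amenable in `G`. -/
theorem coamenable_trans {G : Type*} [Group G] (K H : Subgroup G) (hKH : K ≤ H)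
    (hK : (K.subgroupOf H).Coamenable) (hH : H.Coamenable) :
    K.Coamenable :=
  coamenable_trans_general K H hK hH
end

section
/- Let K be a normal subgroup of a group G and let H be a subgroup with K ≤ H ≤ G. If K is co-amenable in G, then K is co-amenable in H. -/
/-! Since `K` is normal, every point of `G ⧸ K` has stabilizer exactly `K`, so `H` acts on `G ⧸ K`
with all stabilizers equal to `K ⊓ H`. Choosing a base point in each `H`-orbit therefore yields an
`H`-equivariant map `G ⧸ K → H ⧸ (K ⊓ H)`. A `G`-invariant mean on `ℓ∞(G ⧸ K)` is in particular
`H`-invariant, and its push-forward along that map is the required `H`-invariant mean. -/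

def BddFns.comap {X Y : Type*} (p : X → Y) : BddFns Y →ₗ[ℝ] BddFns X where
  toFun f := ⟨(f : Y → ℝ) ∘ p, let ⟨C, hC⟩ := f.2; ⟨C, fun x => hC (p x)⟩⟩
  map_add' _ _ := rfl
  map_smul' _ _ := rfl

namespace InvariantMean

variable {G X Y : Type*} [Group G] [MulAction G X] [MulAction G Y]

def restrict (m : InvariantMean G X) (H : Subgroup G) : InvariantMean H X where
  toFun := m.toFun
  norm_one := m.norm_one
  nonneg := m.nonneg
  invariant h f := m.invariant (h : G) f

def map (m : InvariantMean G X) (p : X →[G] Y) : InvariantMean G Y where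
  toFun := m.toFun ∘ₗ BddFns.comap p
  norm_one := m.norm_one
  nonneg f hf := m.nonneg _ fun x => hf (p x)
  invariant g f := by
    have hcomm : BddFns.comap p ⟨lshift g f, lshift_mem g f.2⟩ =
        ⟨lshift g (BddFns.comap p f), lshift_mem g (BddFns.comap p f).2⟩ :=
      Subtype.ext <| funext fun x => congrArg (f : Y → ℝ) (map_smul p g⁻¹ x).symm
    simp only [LinearMap.comp_apply, hcomm, m.invariant]

end InvariantMean

namespace MulAction

theorem stabilizer_quotient_of_normal {G : Type*} [Group G] (K : Subgroup G) [K.Normal]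
    (x : G ⧸ K) : stabilizer G x = K := by
  induction x using QuotientGroup.induction_on with
  | H a =>
    ext g
    rw [mem_stabilizer_iff, MulAction.Quotient.smul_mk, smul_eq_mul, QuotientGroup.eq, mul_inv_rev,
      mul_assoc, ← Subgroup.Normal.mem_comm_iff inferInstance, mul_inv_cancel_right, inv_mem_iff]

theorem nonempty_mulActionHom_quotient_of_stabilizer_le {G X : Type*} [Group G] [MulAction G X]
    (L : Subgroup G) (hL : ∀ x : X, stabilizer G x ≤ L) : Nonempty (X →[G] G ⧸ L) := by
  let rep : X → X := fun x => (Quotient.mk'' x : Quotient (orbitRel G X)).out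
  have rep_mem : ∀ x, ∃ g : G, g • rep x = x := fun x =>
    mem_orbit_symm.mp (orbitRel_apply.mp (Quotient.mk_out' x))
  have rep_smul : ∀ (g : G) x, rep (g • x) = rep x := fun g x =>
    congrArg Quotient.out (Quotient.sound (orbitRel_apply.mpr (mem_orbit x g)))
  choose σ hσ using rep_mem
  -- `σ x` is determined up to the stabilizer of `rep x`, hence its coset mod `L` is canonical.
  refine ⟨{ toFun := fun x => (σ x : G ⧸ L), map_smul' := fun g x => ?_ }⟩
  change ((σ (g • x) : G) : G ⧸ L) = ((g * σ x : G) : G ⧸ L)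
  rw [QuotientGroup.eq]
  apply hL (rep x)
  calc ((σ (g • x))⁻¹ * (g * σ x)) • rep x = (σ (g • x))⁻¹ • g • x := by
        rw [mul_smul, mul_smul, hσ]
    _ = rep (g • x) := inv_smul_eq_iff.mpr (hσ _).symm
    _ = rep x := rep_smul g x

end MulAction

theorem coamenable_in_intermediate_of_normal_general {G : Type*} [Group G] (K H : Subgroup G)
    [K.Normal] (hK : K.Coamenable) :
    (K.subgroupOf H).Coamenable := by
  obtain ⟨m⟩ := hK
  have hstab : ∀ x : G ⧸ K, MulAction.stabilizer H x ≤ K.subgroupOf H := fun x _ hh =>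
    Subgroup.mem_subgroupOf.mpr ((MulAction.stabilizer_quotient_of_normal K x).le hh)
  obtain ⟨p⟩ := MulAction.nonempty_mulActionHom_quotient_of_stabilizer_le _ hstab
  exact ⟨(m.restrict H).map p⟩

/-- If `K ⊴ G` is normal, `K ≤ H ≤ G`, and `K` is co-amenable in `G`,
then `K` is co-amenable in `H`. -/
theorem coamenable_in_intermediate_of_normal {G : Type*} [Group G] (K H : Subgroup G)
    [K.Normal] (hKH : K ≤ H) (hK : K.Coamenable) :
    (K.subgroupOf H).Coamenable :=
  coamenable_in_intermediate_of_normal_general K H hK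
end

section
/- For every group Q there exist a group G, a subgroup H₀ of G, and a normal subgroup K of H₀, such that K is co-amenable in G and the quotient group H₀/K is isomorphic to Q. -/
/-! Take the restricted wreath product `G = Q ≀ ℤ = (⊕_ℤ Q) ⋊ ℤ`, with `H₀ = ⊕_ℤ Q` and `K` the
kernel of evaluation at `0` on `H₀`, so that `H₀ / K ≅ Q`. In `G / K`, an element of the base
fixes the coset `tⁿK` for all large `n`, because it has finite support, while the generator `t`
of `ℤ` moves `tⁿK` to `tⁿ⁺¹K`. Hence a Banach limit of `n ↦ f (tⁿK)` (a shift-invariant mean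
on `ℓ∞(ℕ)`, built as an ultrafilter limit of Cesàro averages) is a `G`-invariant mean on
`ℓ∞(G / K)`. -/

open Filter Topology

namespace BddFns

variable {X Y : Type*}

lemma comp_mem {f : X → ℝ} (hf : f ∈ BddFns X) (g : Y → X) : f ∘ g ∈ BddFns Y := by
  obtain ⟨C, hC⟩ := hf
  exact ⟨C, fun y => hC (g y)⟩

def comap_s6 (g : Y → X) : BddFns X →ₗ[ℝ] BddFns Y :=
  (LinearMap.funLeft ℝ ℝ g).restrict fun _ hf => comp_mem hf g

@[simp]
lemma coe_comap (g : Y → X) (f : BddFns X) : (comap_s6 g f : Y → ℝ) = f ∘ g := rfl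

lemma exists_tendsto_ultrafilter (U : Ultrafilter X) (f : BddFns X) :
    ∃ a, Tendsto (f : X → ℝ) (U : Filter X) (𝓝 a) := by
  obtain ⟨C, hC⟩ := f.2
  have hU : (U.map (f : X → ℝ) : Filter ℝ) ≤ 𝓟 (Set.Icc (-C) C) :=
    le_principal_iff.2 <| mem_map.2 <| univ_mem' fun x => abs_le.1 (hC x)
  obtain ⟨a, -, ha⟩ := isCompact_Icc.ultrafilter_le_nhds _ hU
  exact ⟨a, ha⟩

lemma tendsto_limUnder_ultrafilter (U : Ultrafilter X) (f : BddFns X) :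
    Tendsto (f : X → ℝ) (U : Filter X) (𝓝 (limUnder (U : Filter X) (f : X → ℝ))) :=
  tendsto_nhds_limUnder (exists_tendsto_ultrafilter U f)

noncomputable def ultraLim (U : Ultrafilter X) : BddFns X →ₗ[ℝ] ℝ where
  toFun f := limUnder (U : Filter X) (f : X → ℝ)
  map_add' f g := tendsto_nhds_unique (tendsto_limUnder_ultrafilter U (f + g))
    ((tendsto_limUnder_ultrafilter U f).add (tendsto_limUnder_ultrafilter U g))
  map_smul' c f := tendsto_nhds_unique (tendsto_limUnder_ultrafilter U (c • f))
    ((tendsto_limUnder_ultrafilter U f).const_mul c)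

lemma ultraLim_eq_of_tendsto (U : Ultrafilter X) {f : BddFns X} {a : ℝ}
    (h : Tendsto (f : X → ℝ) (U : Filter X) (𝓝 a)) : ultraLim U f = a :=
  tendsto_nhds_unique (tendsto_limUnder_ultrafilter U f) h

lemma ultraLim_nonneg (U : Ultrafilter X) {f : BddFns X} (hf : ∀ x, 0 ≤ (f : X → ℝ) x) :
    0 ≤ ultraLim U f :=
  ge_of_tendsto (tendsto_limUnder_ultrafilter U f) (Eventually.of_forall hf)

lemma ultraLim_eq_ultraLim (U : Ultrafilter X) {f g : BddFns X}
    (h : Tendsto ((f - g : BddFns X) : X → ℝ) (U : Filter X) (𝓝 0)) :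
    ultraLim U f = ultraLim U g := by
  rw [← sub_eq_zero, ← map_sub]
  exact ultraLim_eq_of_tendsto U h

lemma cesaro_mem {u : ℕ → ℝ} (hu : u ∈ BddFns ℕ) :
    (fun N : ℕ => (∑ n ∈ Finset.range (N + 1), u n) / (N + 1)) ∈ BddFns ℕ := by
  obtain ⟨C, hC⟩ := hu
  refine ⟨C, fun N => ?_⟩
  have hN : (0 : ℝ) < N + 1 := by positivity
  rw [abs_div, abs_of_pos hN, div_le_iff₀ hN]
  calc |∑ n ∈ Finset.range (N + 1), u n| ≤ ∑ n ∈ Finset.range (N + 1), |u n| :=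
        Finset.abs_sum_le_sum_abs _ _
    _ ≤ ∑ _n ∈ Finset.range (N + 1), C := Finset.sum_le_sum fun n _ => hC n
    _ = C * (N + 1) := by simp [mul_comm]

noncomputable def cesaro : BddFns ℕ →ₗ[ℝ] BddFns ℕ where
  toFun u := ⟨_, cesaro_mem u.2⟩
  map_add' u v := by
    ext N
    simp [Finset.sum_add_distrib, add_div]
  map_smul' c u := by
    ext N
    simp [← Finset.mul_sum, mul_div_assoc]

@[simp]
lemma coe_cesaro (u : BddFns ℕ) (N : ℕ) :
    (cesaro u : ℕ → ℝ) N = (∑ n ∈ Finset.range (N + 1), (u : ℕ → ℝ) n) / (N + 1) := rfl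

lemma tendsto_cesaro_comap_succ_sub (u : BddFns ℕ) :
    Tendsto ((cesaro (comap_s6 Nat.succ u) - cesaro u : BddFns ℕ) : ℕ → ℝ) atTop (𝓝 0) := by
  obtain ⟨C, hC⟩ := u.2
  refine squeeze_zero_norm (a := fun N : ℕ => 2 * C / (N + 1)) (fun N => ?_) ?_
  · have hN : (0 : ℝ) < N + 1 := by positivity
    have htel : (cesaro (comap_s6 Nat.succ u) : ℕ → ℝ) N - (cesaro u : ℕ → ℝ) N
        = ((u : ℕ → ℝ) (N + 1) - (u : ℕ → ℝ) 0) / (N + 1) := by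
      rw [coe_cesaro, coe_cesaro, div_sub_div_same, ← Finset.sum_sub_distrib]
      exact congrArg (· / _) (Finset.sum_range_sub (u : ℕ → ℝ) (N + 1))
    rw [Submodule.coe_sub, Pi.sub_apply, htel, Real.norm_eq_abs, abs_div, abs_of_pos hN]
    gcongr
    linarith [abs_sub ((u : ℕ → ℝ) (N + 1)) ((u : ℕ → ℝ) 0), hC (N + 1), hC 0]
  · exact tendsto_const_nhds.div_atTop
      (tendsto_atTop_add_const_right _ _ tendsto_natCast_atTop_atTop)

end BddFns

structure BanachLimit where
  toFun : BddFns ℕ →ₗ[ℝ] ℝ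
  map_one : toFun ⟨fun _ => 1, ⟨1, fun _ => by norm_num⟩⟩ = 1
  nonneg : ∀ u : BddFns ℕ, (∀ n, 0 ≤ (u : ℕ → ℝ) n) → 0 ≤ toFun u
  map_comap_succ : ∀ u : BddFns ℕ, toFun (BddFns.comap_s6 Nat.succ u) = toFun u

namespace BanachLimit

open BddFns

noncomputable def ofCesaro : BanachLimit where
  toFun := ultraLim (hyperfilter ℕ) ∘ₗ cesaro
  map_one := ultraLim_eq_of_tendsto _ <| tendsto_const_nhds.congr fun N => by
    have hN : (N : ℝ) + 1 ≠ 0 := by positivity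
    simp [hN]
  nonneg u hu := ultraLim_nonneg _ fun N => by
    simp only [coe_cesaro]
    exact div_nonneg (Finset.sum_nonneg fun n _ => hu n) (by positivity)
  map_comap_succ u := ultraLim_eq_ultraLim _ <| (tendsto_cesaro_comap_succ_sub u).mono_left <| by
    rw [← Nat.cofinite_eq_atTop]
    exact hyperfilter_le_cofinite

lemma map_comap_add (L : BanachLimit) (k : ℕ) (u : BddFns ℕ) :
    L.toFun (comap_s6 (· + k) u) = L.toFun u := by
  induction k generalizing u with
  | zero => rfl
  | succ k ih => exact (ih (comap_s6 Nat.succ u)).trans (L.map_comap_succ u)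

lemma map_eq_of_eventuallyEq (L : BanachLimit) {u v : BddFns ℕ}
    (h : (u : ℕ → ℝ) =ᶠ[atTop] v) : L.toFun u = L.toFun v := by
  obtain ⟨k, hk⟩ := eventually_atTop.1 h
  have hzero : comap_s6 (· + k) (u - v) = 0 := by
    ext n
    simp [hk (n + k) (Nat.le_add_left k n)]
  rw [← sub_eq_zero, ← map_sub, ← L.map_comap_add k, hzero, map_zero]

end BanachLimit

namespace BddFns

variable {G X : Type*} [Group G] [MulAction G X]

def lshiftₗ (g : G) : BddFns X →ₗ[ℝ] BddFns X := comap_s6 (g⁻¹ • · : X → X)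

lemma lshiftₗ_mul (g h : G) : lshiftₗ (X := X) (g * h) = lshiftₗ g ∘ₗ lshiftₗ h := by
  ext f x
  simp [lshiftₗ, mul_smul]

lemma lshiftₗ_one : lshiftₗ (X := X) (1 : G) = LinearMap.id := by
  ext f x
  simp [lshiftₗ]

variable (G) in
def invariantSubgroup (m : BddFns X →ₗ[ℝ] ℝ) : Subgroup G where
  carrier := {g | m ∘ₗ lshiftₗ g = m}
  one_mem' := by simp [lshiftₗ_one]
  mul_mem' {g h} (hg : m ∘ₗ lshiftₗ g = m) (hh : m ∘ₗ lshiftₗ h = m) := by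
    change m ∘ₗ lshiftₗ (g * h) = m
    rw [lshiftₗ_mul, ← LinearMap.comp_assoc, hg, hh]
  inv_mem' {g} (hg : m ∘ₗ lshiftₗ g = m) := by
    change m ∘ₗ lshiftₗ g⁻¹ = m
    conv_lhs => rw [← hg, LinearMap.comp_assoc, ← lshiftₗ_mul, mul_inv_cancel, lshiftₗ_one]
    rfl

end BddFns

open BddFns in
theorem nonempty_invariantMean_of_orbit {G X : Type*} [Group G] [MulAction G X] (p : ℕ → X)
    {S : Set G} (hS : Subgroup.closure S = ⊤)
    (hp : ∀ g ∈ S, (∀ᶠ n in atTop, g • p n = p n) ∨ ∀ n, g • p n = p (n + 1)) :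
    Nonempty (InvariantMean G X) := by
  let L := BanachLimit.ofCesaro
  let m := L.toFun ∘ₗ comap_s6 p
  have hSm : S ⊆ invariantSubgroup G m := by
    intro g hg
    refine LinearMap.ext fun f => ?_
    rcases hp g hg with hfix | hshift
    · refine L.map_eq_of_eventuallyEq (hfix.mono fun n hn => ?_)
      simp [lshiftₗ, inv_smul_eq_iff.2 hn.symm]
    · have hcomap : comap_s6 Nat.succ (comap_s6 p (lshiftₗ g f)) = comap_s6 p f := by
        ext n
        simp [lshiftₗ, ← hshift]
      exact (L.map_comap_succ _).symm.trans (congrArg L.toFun hcomap)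
  have hm (g : G) : m ∘ₗ lshiftₗ g = m :=
    (Subgroup.closure_le _).2 hSm (hS ▸ Subgroup.mem_top g)
  exact ⟨{ toFun := m
           norm_one := L.map_one
           nonneg := fun f hf => L.nonneg _ fun n => hf (p n)
           invariant := fun g f => LinearMap.congr_fun (hm g) f }⟩

section Wreath

open Function SemidirectProduct

variable (Q : Type*) [Group Q]

def finiteSupportSubgroup (ι : Type*) : Subgroup (ι → Q) where
  carrier := {b | (mulSupport b).Finite}
  one_mem' := by simp
  mul_mem' hb hc := (hb.union hc).subset (mulSupport_mul _ _)
  inv_mem' hb := by simpa using hb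

variable {Q}

lemma comp_mem_finiteSupportSubgroup {ι κ : Type*} {b : ι → Q}
    (hb : b ∈ finiteSupportSubgroup Q ι) {e : κ → ι} (he : Injective e) :
    b ∘ e ∈ finiteSupportSubgroup Q κ := by
  change (mulSupport (b ∘ e)).Finite
  rw [mulSupport_comp_eq_preimage]
  exact Set.Finite.preimage he.injOn hb

variable (Q) (A : Type*) [AddGroup A]

def shift : Multiplicative A →* MulAut (finiteSupportSubgroup Q A) where
  toFun a :=
    { toFun b := ⟨fun x => b.1 (-a.toAdd + x),
        comp_mem_finiteSupportSubgroup b.2 (add_right_injective _)⟩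
      invFun b := ⟨fun x => b.1 (a.toAdd + x),
        comp_mem_finiteSupportSubgroup b.2 (add_right_injective _)⟩
      left_inv b := by ext; simp
      right_inv b := by ext; simp
      map_mul' _ _ := rfl }
  map_one' := by ext; simp
  map_mul' a a' := by ext; simp [add_assoc]

abbrev RestrictedWreath := finiteSupportSubgroup Q A ⋊[shift Q A] Multiplicative A

variable {A}

@[simp]
lemma shift_symm_apply (a : Multiplicative A) (b : finiteSupportSubgroup Q A) (x : A) :
    ((shift Q A a).symm b : A → Q) x = b.1 (a.toAdd + x) := rfl

variable (A) in
def evalZero : finiteSupportSubgroup Q A →* Q :=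
  (Pi.evalMonoidHom (fun _ : A => Q) 0).comp (finiteSupportSubgroup Q A).subtype

variable (A) in
lemma evalZero_surjective : Surjective (evalZero Q A) := by
  classical
  exact fun q => ⟨⟨Pi.mulSingle 0 q,
    (Set.finite_singleton 0).subset Pi.mulSupport_mulSingle_subset⟩, by simp [evalZero]⟩

variable {Q}

lemma inl_smul_mk_inr {b : finiteSupportSubgroup Q A} {a : Multiplicative A}
    (hb : b.1 a.toAdd = 1) :
    (inl b : RestrictedWreath Q A) •
        (QuotientGroup.mk (inr a) : RestrictedWreath Q A ⧸ (evalZero Q A).ker.map inl)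
      = QuotientGroup.mk (inr a) := by
  change (QuotientGroup.mk (inl b * inr a) : RestrictedWreath Q A ⧸ _) = _
  rw [eq_comm, QuotientGroup.eq, ← mul_assoc, ← map_inv, ← inl_aut_inv,
    Subgroup.mem_map_iff_mem inl_injective, MonoidHom.mem_ker]
  simpa [evalZero] using hb

end Wreath

lemma SemidirectProduct.closure_range_inl_union_image_inr {N G : Type*} [Group N] [Group G]
    {φ : G →* MulAut N} {T : Set G} (hT : Subgroup.closure T = ⊤) :
    Subgroup.closure (Set.range (inl : N →* N ⋊[φ] G) ∪ inr '' T) = ⊤ := by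
  refine eq_top_iff.2 fun x _ => ?_
  rw [← inl_left_mul_inr_right x]
  refine mul_mem (Subgroup.subset_closure (Or.inl ⟨_, rfl⟩)) ?_
  refine Subgroup.closure_mono Set.subset_union_right ?_
  rw [← MonoidHom.map_closure, hT]
  exact ⟨_, Subgroup.mem_top _, rfl⟩

lemma Int.closure_ofAdd_one : Subgroup.closure {Multiplicative.ofAdd (1 : ℤ)} = ⊤ :=
  eq_top_iff.2 fun z _ => by
    have h := zpow_mem (Subgroup.subset_closure (Set.mem_singleton (Multiplicative.ofAdd (1 : ℤ))))
      z.toAdd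
    rwa [← ofAdd_zsmul, smul_eq_mul, mul_one, ofAdd_toAdd] at h

open SemidirectProduct in
theorem coamenable_map_inl_ker_evalZero (Q : Type*) [Group Q] :
    ((evalZero Q ℤ).ker.map (inl : _ →* RestrictedWreath Q ℤ)).Coamenable := by
  refine nonempty_invariantMean_of_orbit
    (fun n : ℕ => (QuotientGroup.mk (inr (Multiplicative.ofAdd (n : ℤ))) :
      RestrictedWreath Q ℤ ⧸ (evalZero Q ℤ).ker.map inl))
    (closure_range_inl_union_image_inr Int.closure_ofAdd_one) ?_
  rintro g (⟨b, rfl⟩ | ⟨_, rfl, rfl⟩)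
  · have hfin : {n : ℕ | b.1 n ≠ 1}.Finite := Set.Finite.preimage Nat.cast_injective.injOn b.2
    refine Or.inl ((Nat.cofinite_eq_atTop ▸ hfin.eventually_cofinite_notMem).mono fun n hn => ?_)
    exact inl_smul_mk_inr (not_not.1 hn)
  · refine Or.inr fun n => ?_
    change (QuotientGroup.mk (inr (Multiplicative.ofAdd 1) * inr (Multiplicative.ofAdd (n : ℤ))) :
      RestrictedWreath Q ℤ ⧸ _) = _
    rw [← map_mul, ← ofAdd_add, add_comm]
    push_cast
    rfl

theorem MonoidHom.exists_surjective_ker_eq_subgroupOf_range {B G Q : Type*} [Group B] [Group G]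
    [Group Q] {i : B →* G} (hi : Function.Injective i) {ψ : B →* Q} (hψ : Function.Surjective ψ) :
    ∃ φ : i.range →* Q, Function.Surjective φ ∧ φ.ker = (ψ.ker.map i).subgroupOf i.range := by
  refine ⟨ψ.comp (MonoidHom.ofInjective hi).symm.toMonoidHom,
    hψ.comp (MulEquiv.surjective _), ?_⟩
  ext x
  rw [MonoidHom.mem_ker, Subgroup.mem_subgroupOf, ← MonoidHom.apply_ofInjective_symm hi x,
    Subgroup.mem_map_iff_mem hi]
  rfl

/-- For any group `Q` there is a triple `K ⊴ H₀ ≤ G` with `K` co-amenable in `G`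
and `H₀/K ≅ Q` (expressed via a surjective homomorphism `H₀ →* Q` with kernel `K`). -/
theorem exists_coamenable_with_quotient (Q : Type u) [Group Q] :
    ∃ (G : GrpCat.{u}) (H₀ K : Subgroup G) (φ : H₀ →* Q),
      K ≤ H₀ ∧ K.Coamenable ∧
      Function.Surjective φ ∧ φ.ker = K.subgroupOf H₀ := by
  obtain ⟨φ, hφ, hker⟩ := MonoidHom.exists_surjective_ker_eq_subgroupOf_range
    (SemidirectProduct.inl_injective (φ := shift Q ℤ)) (evalZero_surjective Q ℤ)
  exact ⟨GrpCat.of (RestrictedWreath Q ℤ), _, _, φ, Subgroup.map_le_range _ _,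
    coamenable_map_inl_ker_evalZero Q, hφ, hker⟩
end

section
/- Let K ≤ H ≤ G be subgroups of a group G. If H is co-amenable in G and there exists an H-invariant mean on ℓ∞(G/K), then K is co-amenable in G. -/
/-!
Averaging with the `H`-invariant mean `μ` on ℓ∞(X) turns `f` into the function
`gH ↦ μ(g⁻¹ · f)` on `G/H`, well defined because `μ` is `H`-invariant; feeding that into
the `G`-invariant mean on ℓ∞(G/H) gives a `G`-invariant mean on ℓ∞(X).
-/

section

variable {G X : Type*} [Group G] [MulAction G X]

lemma lshift_lshift (g h : G) (f : X → ℝ) : lshift g (lshift h f) = lshift (g * h) f := by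
  funext x
  simp [lshift, mul_smul]

def BddFns.lshiftₗ_s11 (g : G) : BddFns X →ₗ[ℝ] BddFns X where
  toFun f := ⟨lshift g f, lshift_mem g f.2⟩
  map_add' _ _ := rfl
  map_smul' _ _ := rfl

lemma BddFns.lshiftₗ_lshiftₗ (g h : G) (f : BddFns X) :
    BddFns.lshiftₗ_s11 g (BddFns.lshiftₗ_s11 h f) = BddFns.lshiftₗ_s11 (g * h) f :=
  Subtype.ext (lshift_lshift g h (f : X → ℝ))

def BddFns.one : BddFns X := ⟨fun _ => 1, 1, fun _ => by norm_num⟩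

namespace InvariantMean

lemma map_lshift_of_mem {H : Subgroup G} (μ : InvariantMean H X) {g : G} (hg : g ∈ H)
    (f : BddFns X) : μ.toFun (BddFns.lshiftₗ_s11 g f) = μ.toFun f :=
  μ.invariant ⟨g, hg⟩ f

lemma abs_map_le (μ : InvariantMean G X) (f : BddFns X) {C : ℝ}
    (hC : ∀ x, |(f : X → ℝ) x| ≤ C) : |μ.toFun f| ≤ C := by
  have hone : μ.toFun BddFns.one = 1 := μ.norm_one
  have hupper : 0 ≤ μ.toFun (C • BddFns.one - f) :=
    μ.nonneg _ fun x => by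
      change 0 ≤ C * 1 - (f : X → ℝ) x
      linarith [(abs_le.mp (hC x)).2]
  have hlower : 0 ≤ μ.toFun (f + C • BddFns.one) :=
    μ.nonneg _ fun x => by
      change 0 ≤ (f : X → ℝ) x + C * 1
      linarith [(abs_le.mp (hC x)).1]
  rw [map_sub, map_smul, hone, smul_eq_mul, mul_one] at hupper
  rw [map_add, map_smul, hone, smul_eq_mul, mul_one] at hlower
  exact abs_le.mpr ⟨by linarith, by linarith⟩

variable {H : Subgroup G}

def cosetAverage (μ : InvariantMean H X) (f : BddFns X) : G ⧸ H → ℝ :=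
  Quotient.lift (fun g => μ.toFun (BddFns.lshiftₗ_s11 g⁻¹ f)) fun a b hab => by
    have hba : b⁻¹ * a ∈ H := by
      simpa using H.inv_mem (QuotientGroup.leftRel_apply.mp hab)
    change μ.toFun (BddFns.lshiftₗ_s11 a⁻¹ f) = μ.toFun (BddFns.lshiftₗ_s11 b⁻¹ f)
    rw [← μ.map_lshift_of_mem hba, BddFns.lshiftₗ_lshiftₗ, mul_inv_cancel_right]

@[simp]
lemma cosetAverage_mk (μ : InvariantMean H X) (f : BddFns X) (g : G) :
    μ.cosetAverage f (g : G ⧸ H) = μ.toFun (BddFns.lshiftₗ_s11 g⁻¹ f) :=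
  rfl

lemma cosetAverage_mem (μ : InvariantMean H X) (f : BddFns X) :
    μ.cosetAverage f ∈ BddFns (G ⧸ H) := by
  obtain ⟨C, hC⟩ := f.2
  exact ⟨C, Quotient.ind fun g => μ.abs_map_le _ fun x => hC _⟩

def cosetAverageₗ (μ : InvariantMean H X) : BddFns X →ₗ[ℝ] BddFns (G ⧸ H) where
  toFun f := ⟨μ.cosetAverage f, μ.cosetAverage_mem f⟩
  map_add' f f' := Subtype.ext <| funext <| Quotient.ind fun g => by
    change μ.cosetAverage (f + f') g = μ.cosetAverage f g + μ.cosetAverage f' g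
    simp [map_add]
  map_smul' c f := Subtype.ext <| funext <| Quotient.ind fun g => by
    change μ.cosetAverage (c • f) g = c * μ.cosetAverage f g
    simp [map_smul]

lemma cosetAverage_one (μ : InvariantMean H X) :
    μ.cosetAverage BddFns.one = fun _ => 1 :=
  funext <| Quotient.ind fun _ => μ.norm_one

lemma cosetAverage_nonneg (μ : InvariantMean H X) {f : BddFns X}
    (hf : ∀ x, 0 ≤ (f : X → ℝ) x) (y : G ⧸ H) : 0 ≤ μ.cosetAverage f y :=
  Quotient.inductionOn y fun _ => μ.nonneg _ fun _ => hf _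

lemma cosetAverage_lshift (μ : InvariantMean H X) (g : G) (f : BddFns X) :
    μ.cosetAverage (BddFns.lshiftₗ_s11 g f) = lshift g (μ.cosetAverage f) :=
  funext <| Quotient.ind fun a => by
    change μ.cosetAverage (BddFns.lshiftₗ_s11 g f) a = μ.cosetAverage f ((g⁻¹ * a : G) : G ⧸ H)
    simp [BddFns.lshiftₗ_lshiftₗ]

def induce (μ : InvariantMean H X) (ν : InvariantMean G (G ⧸ H)) : InvariantMean G X where
  toFun := ν.toFun ∘ₗ μ.cosetAverageₗ
  norm_one := by
    change ν.toFun ⟨μ.cosetAverage BddFns.one, _⟩ = 1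
    simp_rw [cosetAverage_one]
    exact ν.norm_one
  nonneg f hf := ν.nonneg _ (μ.cosetAverage_nonneg hf)
  invariant g f := by
    change ν.toFun ⟨μ.cosetAverage (BddFns.lshiftₗ_s11 g f), _⟩ = ν.toFun ⟨μ.cosetAverage f, _⟩
    simp_rw [cosetAverage_lshift]
    exact ν.invariant g ⟨μ.cosetAverage f, μ.cosetAverage_mem f⟩

end InvariantMean

end

theorem coamenable_of_relative_mean_general {G : Type*} [Group G] (K H : Subgroup G)
    (hH : H.Coamenable)
    (hm : Nonempty (InvariantMean H (G ⧸ K))) : K.Coamenable :=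
  let ⟨ν⟩ := hH
  let ⟨μ⟩ := hm
  ⟨μ.induce ν⟩

/-- If `K ≤ H ≤ G`, `H` is co-amenable in `G`, and there is an `H`-invariant mean
on ℓ∞(G/K), then `K` is co-amenable in `G`. -/
theorem coamenable_of_relative_mean {G : Type*} [Group G] (K H : Subgroup G)
    (hKH : K ≤ H) (hH : H.Coamenable)
    (hm : Nonempty (InvariantMean H (G ⧸ K))) : K.Coamenable :=
  coamenable_of_relative_mean_general K H hH hm
end

section
/- There exists an injective group homomorphism θ from the free group F₂ on two generators to itself such that the image θ(F₂) is not co-amenable in F₂. -/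
open Set Pointwise

namespace InvariantMean

variable {G X : Type*} [Group G] [MulAction G X] (m : InvariantMean G X)

noncomputable def indicatorFn (S : Set X) : BddFns X :=
  ⟨S.indicator 1, 1, fun x => by
    by_cases hx : x ∈ S <;> simp [hx]⟩

noncomputable def mass (S : Set X) : ℝ := m.toFun (indicatorFn S)

lemma mass_univ : m.mass univ = 1 := by
  rw [← m.norm_one, mass]
  congr 1
  ext x
  simp [indicatorFn]

lemma mass_mono {S T : Set X} (h : S ⊆ T) : m.mass S ≤ m.mass T := by
  have hdiff : 0 ≤ m.toFun (indicatorFn T - indicatorFn S) :=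
    m.nonneg _ fun x => sub_nonneg.2 (indicator_le_indicator_of_subset h (fun _ => zero_le_one) x)
  rw [map_sub] at hdiff
  exact sub_nonneg.1 hdiff

lemma mass_union {S T : Set X} (h : Disjoint S T) :
    m.mass (S ∪ T) = m.mass S + m.mass T := by
  rw [mass, mass, mass, ← map_add]
  congr 1
  ext x
  exact congrFun (indicator_union_of_disjoint h 1) x

lemma mass_add_mass_le_one {S T : Set X} (h : Disjoint S T) : m.mass S + m.mass T ≤ 1 := by
  rw [← m.mass_union h, ← m.mass_univ]
  exact m.mass_mono (subset_univ _)

lemma mass_union_le (S T : Set X) : m.mass (S ∪ T) ≤ m.mass S + m.mass T := by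
  rw [← union_sdiff_self, m.mass_union disjoint_sdiff_self_right]
  linarith [m.mass_mono (sdiff_subset : T \ S ⊆ T)]

lemma mass_smul (g : G) (S : Set X) : m.mass (g • S) = m.mass S := by
  rw [mass, mass, ← m.invariant g (indicatorFn S)]
  congr 1
  ext x
  by_cases hx : g⁻¹ • x ∈ S <;> simp [indicatorFn, lshift, hx, mem_smul_set_iff_inv_smul_mem]

lemma one_le_mass_add_of_cover (g : G) {S T : Set X} (h : ∀ x, x ∈ S ∨ g⁻¹ • x ∈ T) :
    1 ≤ m.mass S + m.mass T := by
  have hcover : S ∪ g • T = univ :=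
    eq_univ_of_forall fun x => (h x).imp_right (mem_smul_set_iff_inv_smul_mem.2)
  calc 1 = m.mass (S ∪ g • T) := by rw [hcover, mass_univ]
    _ ≤ m.mass S + m.mass (g • T) := m.mass_union_le S _
    _ = m.mass S + m.mass T := by rw [m.mass_smul]

end InvariantMean

section OrbitMap

variable {G Y : Type*} [Group G] {H : Subgroup G}

def quotientOrbitMap (ρ : G →* Equiv.Perm Y) (y : Y) (hH : ∀ h ∈ H, ρ h y = y) :
    G ⧸ H → Y :=
  fun x => Quotient.liftOn' x (fun g => ρ g y) fun g g' hgg' => by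
    rw [QuotientGroup.leftRel_apply] at hgg'
    rw [← mul_inv_cancel_left g g', map_mul, Equiv.Perm.mul_apply, hH _ hgg']

lemma quotientOrbitMap_smul {ρ : G →* Equiv.Perm Y} {y : Y} (hH : ∀ h ∈ H, ρ h y = y)
    (g : G) (x : G ⧸ H) :
    quotientOrbitMap ρ y hH (g • x) = ρ g (quotientOrbitMap ρ y hH x) := by
  induction x using QuotientGroup.induction_on with
  | H g' =>
    show ρ (g * g') y = ρ g (ρ g' y)
    rw [map_mul, Equiv.Perm.mul_apply]

end OrbitMap

namespace InvariantMean

variable {G X Y : Type*} [Group G] [MulAction G X] (m : InvariantMean G X)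
  {ρ : G →* Equiv.Perm Y} {φ : X → Y}

lemma mass_preimage_image (hφ : ∀ g x, φ (g • x) = ρ g (φ x)) (g : G) (S : Set Y) :
    m.mass (φ ⁻¹' (ρ g '' S)) = m.mass (φ ⁻¹' S) := by
  rw [← m.mass_smul g (φ ⁻¹' S)]
  congr 1
  ext x
  simp [mem_smul_set_iff_inv_smul_mem, hφ, Equiv.Perm.inv_def]

lemma one_le_mass_preimage_add (hφ : ∀ g x, φ (g • x) = ρ g (φ x)) (g : G) {S T : Set Y}
    (h : ∀ y, y ∈ S ∨ (ρ g)⁻¹ y ∈ T) : 1 ≤ m.mass (φ ⁻¹' S) + m.mass (φ ⁻¹' T) :=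
  m.one_le_mass_add_of_cover g fun x => by
    simpa only [mem_preimage, hφ, map_inv] using h (φ x)

end InvariantMean

namespace FreeGroup

variable {α : Type*}

section StartsWith

variable [DecidableEq α]

lemma one_notMem_startsWith (w : α × Bool) : (1 : FreeGroup α) ∉ startsWith w :=
  fun h => startsWith.ne_one 1 h rfl

lemma mk_mul_mk_mul_mem_startsWith {w : α × Bool} {y : FreeGroup α}
    (hy : y ∉ startsWith (w.1, !w.2)) : mk [w] * (mk [w] * y) ∈ startsWith w :=
  have hw : w ≠ (w.1, !w.2) := fun h => by simpa using congrArg Prod.snd h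
  startsWith_mk_mul _ <|
    (startsWith.disjoint_iff_ne.2 hw).notMem_of_mem_left (startsWith_mk_mul y hy)

end StartsWith

theorem injective_lift_sq [Nontrivial α] :
    Function.Injective (lift fun i : α => of i ^ 2) := by
  classical
  refine injective_lift_of_ping_pong _ (fun i => startsWith (i, true))
    (fun i => startsWith (i, false)) (fun i => ⟨of i, ?_⟩) ?_ ?_ ?_ ?_ ?_
  · exact startsWith_mk_mul (w := (i, true)) 1 (one_notMem_startsWith _)
  · intro i j hij
    simpa using hij
  · intro i j hij
    simpa using hij
  · intro i j
    simp
  · rintro i _ ⟨y, hy, rfl⟩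
    show of i ^ 2 * y ∈ _
    rw [sq, mul_assoc]
    exact mk_mul_mk_mul_mem_startsWith (w := (i, true)) hy
  · rintro i _ ⟨y, hy, rfl⟩
    show (of i ^ 2)⁻¹ * y ∈ _
    rw [sq, mul_inv_rev, mul_assoc]
    exact mk_mul_mk_mul_mem_startsWith (w := (i, false)) hy

section PerturbedTranslation

variable [DecidableEq α]

def perturbedTranslation (i : α) : Equiv.Perm (FreeGroup α) :=
  (Equiv.swap 1 (of i ^ 2)⁻¹).trans (Equiv.mulLeft (of i))

lemma perturbedTranslation_apply (i : α) (y : FreeGroup α) :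
    perturbedTranslation i y = of i * Equiv.swap 1 (of i ^ 2)⁻¹ y := rfl

lemma perturbedTranslation_inv_apply (i : α) (y : FreeGroup α) :
    (perturbedTranslation i)⁻¹ y = Equiv.swap 1 (of i ^ 2)⁻¹ ((of i)⁻¹ * y) := rfl

lemma perturbedTranslation_one (i : α) : perturbedTranslation i 1 = (of i)⁻¹ := by
  rw [perturbedTranslation_apply, Equiv.swap_apply_left, sq, mul_inv_rev, mul_inv_cancel_left]

lemma perturbedTranslation_sq_one (i : α) : (perturbedTranslation i ^ 2) 1 = 1 := by
  have hne : (of i)⁻¹ ≠ (of i ^ 2)⁻¹ := by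
    rw [Ne, inv_inj, sq, left_eq_mul]
    exact of_ne_one i
  rw [sq, Equiv.Perm.mul_apply, perturbedTranslation_one, perturbedTranslation_apply,
    Equiv.swap_apply_of_ne_of_ne (inv_ne_one.2 (of_ne_one i)) hne, mul_inv_cancel]

lemma perturbedTranslation_inv_apply_mem {i : α} {y : FreeGroup α} (hy : y ∉ startsWith (i, true)) :
    (perturbedTranslation i)⁻¹ y ∈ insert 1 (startsWith (i, false)) := by
  have hz : (of i)⁻¹ * y ∈ startsWith (i, false) := startsWith_mk_mul (w := (i, false)) y hy
  rw [perturbedTranslation_inv_apply]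
  by_cases hp : (of i)⁻¹ * y = (of i ^ 2)⁻¹
  · rw [hp, Equiv.swap_apply_right]
    exact mem_insert 1 _
  · rw [Equiv.swap_apply_of_ne_of_ne (startsWith.ne_one _ hz) hp]
    exact mem_insert_of_mem 1 hz

end PerturbedTranslation

theorem not_coamenable_range_lift_sq {a b : α} (hab : a ≠ b) :
    ¬ (lift fun i : α => of i ^ 2).range.Coamenable := by
  classical
  rintro ⟨m⟩
  set ρ : FreeGroup α →* Equiv.Perm (FreeGroup α) := lift perturbedTranslation
  have hfix : ∀ h ∈ (lift fun i : α => of i ^ 2).range, ρ h 1 = 1 := by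
    refine range_lift_le (s := (MulAction.stabilizer (Equiv.Perm _) 1).comap ρ) ?_
    rintro _ ⟨i, rfl⟩
    simpa [ρ] using perturbedTranslation_sq_one i
  set φ := quotientOrbitMap ρ 1 hfix
  have hφ := quotientOrbitMap_smul hfix
  set μ : Set (FreeGroup α) → ℝ := fun S => m.mass (φ ⁻¹' S)
  have hcover (i : α) :
      1 ≤ μ (startsWith (i, true)) + μ (insert 1 (startsWith (i, false))) :=
    m.one_le_mass_preimage_add hφ (of i) fun y => or_iff_not_imp_left.2 fun hy => by
      simpa [ρ] using perturbedTranslation_inv_apply_mem hy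
  have hinsert (i : α) :
      μ (insert 1 (startsWith (i, false))) ≤ μ {1} + μ (startsWith (i, false)) :=
    m.mass_union_le _ _
  have hadd {S T : Set (FreeGroup α)} (h : Disjoint S T) : μ (S ∪ T) = μ S + μ T :=
    m.mass_union (h.preimage φ)
  have hle_one {S T : Set (FreeGroup α)} (h : Disjoint S T) : μ S + μ T ≤ 1 :=
    m.mass_add_mass_le_one (h.preimage φ)
  have hletters := hle_one (S := startsWith (a, true) ∪ insert 1 (startsWith (a, false)))
    (T := startsWith (b, true) ∪ startsWith (b, false))
    (by simp [disjoint_union_left, disjoint_union_right, one_notMem_startsWith, hab])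
  rw [hadd (by simp [one_notMem_startsWith]), hadd (by simp)] at hletters
  have hmove : μ {(of a)⁻¹} = μ {1} := by
    have h := m.mass_preimage_image hφ (of a) {1}
    rwa [image_singleton, lift_apply_of, perturbedTranslation_one] at h
  have hpoints := hle_one (S := {1}) (T := {(of a)⁻¹})
    (disjoint_singleton.2 (inv_ne_one.2 (of_ne_one a)).symm)
  linarith [hcover a, hcover b, hinsert b]

end FreeGroup

/-- There is an injective endomorphism `θ` of the free group `F₂` on two generators
whose image `θ(F₂)` is not co-amenable in `F₂`. -/
theorem exists_injective_endo_range_not_coamenable :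
    ∃ θ : FreeGroup (Fin 2) →* FreeGroup (Fin 2),
      Function.Injective θ ∧ ¬ θ.range.Coamenable :=
  ⟨_, FreeGroup.injective_lift_sq, FreeGroup.not_coamenable_range_lift_sq Fin.zero_ne_one⟩
end
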